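/- arXiv:2012.13535 — 6 statements merged into one kernel-verified Lean document; each statement's English description precedes it below -/
import Mathlib

section
/- Let H = H1 ⊕ H2 be an orthogonal decomposition of a complex separable Hilbert space H, and let T be a bounded linear operator on H leaving H1 invariant, so that T has the block form [[T1, T3],[0, T2]] where T1 = P_{H1} T|_{H1}, T2 = P_{H2} T|_{H2}, T3 = P_{H1} T|_{H2} (P denoting orthogonal projection). If T belongs to B_{m+n}(Ω) and T1 belongs to B_m(Ω), then T2 belongs to B_n(Ω). -/
/-!
Write `T₁`, `T₂` for the compressions of `T` to `H₁` and `H₁ᗮ`. Since `H₁` is invariant,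
`P_{H₁ᗮ} (T - ω) = (T₂ - ω) P_{H₁ᗮ}`. Hence `T₂ - ω` is onto, `P_{H₁ᗮ}` maps `ker (T - ω)`
into `ker (T₂ - ω)` (so the span of the kernels of `T₂ - ω` is dense), and, because `T₁ - ω`
is onto, this map is onto with kernel `ker (T₁ - ω)`. Rank–nullity then gives
`dim ker (T₂ - ω) = (m + n) - m`.
-/

open ContinuousLinearMap Submodule

noncomputable section

/-- The Cowen–Douglas class `B_n(Ω)`: `T - ω` is surjective for every `ω ∈ Ω`,
`ker (T - ω)` has dimension `n`, and the closed linear span of the kernels is the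
whole space. -/
def CowenDouglas {H : Type*} [NormedAddCommGroup H] [InnerProductSpace ℂ H]
    (T : H →L[ℂ] H) (Ω : Set ℂ) (n : ℕ) : Prop :=
  (∀ ω ∈ Ω, Function.Surjective (T - ω • (1 : H →L[ℂ] H)) ∧
      Module.finrank ℂ (LinearMap.ker ((T - ω • (1 : H →L[ℂ] H) : H →L[ℂ] H) : H →ₗ[ℂ] H)) = n) ∧
  (⨆ ω ∈ Ω, LinearMap.ker ((T - ω • (1 : H →L[ℂ] H) : H →L[ℂ] H) : H →ₗ[ℂ] H)).topologicalClosure = ⊤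

theorem Submodule.finrank_comap_subtype {K V : Type*} [DivisionRing K] [AddCommGroup V]
    [Module K V] (p q : Submodule K V) :
    Module.finrank K (q.comap p.subtype) = Module.finrank K ↥(p ⊓ q) := by
  rw [← finrank_map_subtype_eq, map_comap_subtype]

theorem Submodule.finrank_map_add_finrank_inf_ker {K V W : Type*} [DivisionRing K]
    [AddCommGroup V] [Module K V] [AddCommGroup W] [Module K W] (f : V →ₗ[K] W)
    (p : Submodule K V) [FiniteDimensional K p] :
    Module.finrank K (p.map f) + Module.finrank K ↥(p ⊓ LinearMap.ker f) =
      Module.finrank K p := by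
  rw [← (f.domRestrict p).finrank_range_add_finrank_ker, LinearMap.range_domRestrict,
    LinearMap.ker_domRestrict, finrank_comap_subtype]

namespace ContinuousLinearMap

variable {𝕜 E : Type*} [RCLike 𝕜] [NormedAddCommGroup E] [InnerProductSpace 𝕜 E]
  {A : E →L[𝕜] E}

theorem mapsTo_sub_smul_one {K : Submodule 𝕜 E} (hA : Set.MapsTo A K K) (c : 𝕜) :
    Set.MapsTo (A - c • 1 : E →L[𝕜] E) K K :=
  fun _ hx => K.sub_mem (hA hx) (K.smul_mem c hx)

variable (K : Submodule 𝕜 E) [K.HasOrthogonalProjection]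

def compression (A : E →L[𝕜] E) : K →L[𝕜] K :=
  K.orthogonalProjectionOnto.comp (A.comp K.subtypeL)

theorem compression_apply (A : E →L[𝕜] E) (x : K) :
    A.compression K x = K.orthogonalProjectionOnto (A x) :=
  rfl

theorem compression_sub_smul_one (A : E →L[𝕜] E) (c : 𝕜) :
    (A - c • 1).compression K = A.compression K - c • 1 := by
  ext x
  simp [compression_apply]

variable {K}

theorem coe_compression_of_mapsTo (hA : Set.MapsTo A K K) (x : K) :
    (A.compression K x : E) = A x := by
  rw [compression_apply, coe_orthogonalProjectionOnto_apply, starProjection_eq_self_iff.2 (hA x.2)]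

theorem ker_compression_of_mapsTo (hA : Set.MapsTo A K K) :
    LinearMap.ker (A.compression K : K →ₗ[𝕜] K) =
      (LinearMap.ker (A : E →ₗ[𝕜] E)).comap K.subtype := by
  ext x
  simp [← coe_compression_of_mapsTo hA x]

theorem orthogonalProjectionOnto_orthogonal_comp_of_mapsTo (hA : Set.MapsTo A K K) :
    Kᗮ.orthogonalProjectionOnto ∘L A = A.compression Kᗮ ∘L Kᗮ.orthogonalProjectionOnto := by
  ext x
  have hx : (Kᗮ.orthogonalProjectionOnto x : E) = x - K.orthogonalProjectionOnto x :=
    eq_sub_of_add_eq' (K.starProjection_add_starProjection_orthogonal x)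
  simp only [comp_apply, compression_apply, hx, map_sub, sub_zero,
    orthogonalProjectionOnto_orthogonal_apply_eq_zero (hA (K.orthogonalProjectionOnto x).2)]

theorem surjective_compression_orthogonal (hA : Set.MapsTo A K K)
    (h : Function.Surjective A) : Function.Surjective (A.compression Kᗮ) := by
  intro y
  obtain ⟨x, hx⟩ := h y
  refine ⟨Kᗮ.orthogonalProjectionOnto x, ?_⟩
  rw [← comp_apply, ← orthogonalProjectionOnto_orthogonal_comp_of_mapsTo hA, comp_apply, hx,
    orthogonalProjectionOnto_mem_subspace_eq_self]

theorem map_ker_le_ker_compression_orthogonal (hA : Set.MapsTo A K K) :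
    (LinearMap.ker (A : E →ₗ[𝕜] E)).map (Kᗮ.orthogonalProjectionOnto : E →ₗ[𝕜] Kᗮ) ≤
      LinearMap.ker (A.compression Kᗮ : Kᗮ →ₗ[𝕜] Kᗮ) := by
  rintro _ ⟨x, hx, rfl⟩
  have hAx : A x = 0 := hx
  simp [← comp_apply (A.compression Kᗮ), ← orthogonalProjectionOnto_orthogonal_comp_of_mapsTo hA,
    hAx]

theorem map_ker_eq_ker_compression_orthogonal (hA : Set.MapsTo A K K)
    (h₁ : Function.Surjective (A.compression K)) :
    (LinearMap.ker (A : E →ₗ[𝕜] E)).map (Kᗮ.orthogonalProjectionOnto : E →ₗ[𝕜] Kᗮ) =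
      LinearMap.ker (A.compression Kᗮ : Kᗮ →ₗ[𝕜] Kᗮ) := by
  refine le_antisymm (map_ker_le_ker_compression_orthogonal hA) fun z hz => ?_
  have hAz : A z ∈ K := by
    have : Kᗮ.orthogonalProjectionOnto (A z) = 0 := hz
    rwa [orthogonalProjectionOnto_eq_zero_iff, K.orthogonal_orthogonal] at this
  obtain ⟨u, hu⟩ := h₁ ⟨-A z, K.neg_mem hAz⟩
  have hu' : A u = -A z := by rw [← coe_compression_of_mapsTo hA, hu]
  refine ⟨u + z, by simp [hu'], ?_⟩
  simp [orthogonalProjectionOnto_orthogonal_apply_eq_zero u.2]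

theorem finrank_ker_eq_finrank_ker_compression_add (hA : Set.MapsTo A K K)
    (h₁ : Function.Surjective (A.compression K))
    [FiniteDimensional 𝕜 (LinearMap.ker (A : E →ₗ[𝕜] E))] :
    Module.finrank 𝕜 (LinearMap.ker (A : E →ₗ[𝕜] E)) =
      Module.finrank 𝕜 (LinearMap.ker (A.compression K : K →ₗ[𝕜] K)) +
        Module.finrank 𝕜 (LinearMap.ker (A.compression Kᗮ : Kᗮ →ₗ[𝕜] Kᗮ)) := by
  rw [← finrank_map_add_finrank_inf_ker (Kᗮ.orthogonalProjectionOnto : E →ₗ[𝕜] Kᗮ),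
    map_ker_eq_ker_compression_orthogonal hA h₁, ker_compression_of_mapsTo hA,
    finrank_comap_subtype, ker_orthogonalProjectionOnto, K.orthogonal_orthogonal,
    inf_comm, add_comm]

theorem topologicalClosure_iSup_ker_compression_orthogonal (hA : Set.MapsTo A K K) (Ω : Set 𝕜)
    (h : (⨆ ω ∈ Ω, LinearMap.ker ((A - ω • 1 : E →L[𝕜] E) : E →ₗ[𝕜] E)).topologicalClosure = ⊤) :
    (⨆ ω ∈ Ω, LinearMap.ker ((A.compression Kᗮ - ω • 1 : Kᗮ →L[𝕜] Kᗮ) : Kᗮ →ₗ[𝕜] Kᗮ)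
      ).topologicalClosure = ⊤ := by
  have hP : DenseRange Kᗮ.orthogonalProjectionOnto := Function.Surjective.denseRange
    fun z => ⟨z, orthogonalProjectionOnto_mem_subspace_eq_self z⟩
  refine top_le_iff.1 (hP.topologicalClosure_map_submodule h ▸ topologicalClosure_mono ?_)
  refine map_le_iff_le_comap.2 (iSup₂_le fun ω hω => map_le_iff_le_comap.1 ?_)
  refine le_iSup₂_of_le ω hω ?_
  rw [← compression_sub_smul_one]
  exact map_ker_le_ker_compression_orthogonal (mapsTo_sub_smul_one hA ω)

end ContinuousLinearMap

theorem stmt_0_general {H : Type*} [NormedAddCommGroup H] [InnerProductSpace ℂ H]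
    (Ω : Set ℂ)
    (m n : ℕ) (hm : 0 < m)
    (T : H →L[ℂ] H) (H₁ : Submodule ℂ H) [CompleteSpace H₁]
    (hinv : ∀ x ∈ H₁, T x ∈ H₁)
    (hT : CowenDouglas T Ω (m + n))
    (hT1 : CowenDouglas ((orthogonalProjection H₁).comp (T.comp H₁.subtypeL)) Ω m) :
    CowenDouglas ((orthogonalProjection H₁ᗮ).comp (T.comp H₁ᗮ.subtypeL)) Ω n := by
  change CowenDouglas (T.compression H₁) Ω m at hT1
  change CowenDouglas (T.compression H₁ᗮ) Ω n
  have hTK : Set.MapsTo T H₁ H₁ := fun x hx => hinv x hx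
  refine ⟨fun ω hω => ?_, topologicalClosure_iSup_ker_compression_orthogonal hTK Ω hT.2⟩
  obtain ⟨hS, hSker⟩ := hT.1 ω hω
  obtain ⟨hS₁, hS₁ker⟩ := hT1.1 ω hω
  rw [← compression_sub_smul_one] at hS₁ hS₁ker ⊢
  have hSK := mapsTo_sub_smul_one hTK ω
  have : FiniteDimensional ℂ (LinearMap.ker ((T - ω • 1 : H →L[ℂ] H) : H →ₗ[ℂ] H)) :=
    Module.finite_of_finrank_pos (by omega)
  have hrank := finrank_ker_eq_finrank_ker_compression_add hSK hS₁
  exact ⟨surjective_compression_orthogonal hSK hS, by omega⟩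

theorem stmt_0 {H : Type*} [NormedAddCommGroup H] [InnerProductSpace ℂ H]
    [CompleteSpace H] [TopologicalSpace.SeparableSpace H]
    (Ω : Set ℂ) (hΩopen : IsOpen Ω) (hΩbdd : Bornology.IsBounded Ω)
    (m n : ℕ) (hm : 0 < m) (hn : 0 < n)
    (T : H →L[ℂ] H) (H₁ : Submodule ℂ H) [CompleteSpace H₁]
    (hinv : ∀ x ∈ H₁, T x ∈ H₁)
    (hT : CowenDouglas T Ω (m + n))
    (hT1 : CowenDouglas ((orthogonalProjection H₁).comp (T.comp H₁.subtypeL)) Ω m) :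
    CowenDouglas ((orthogonalProjection H₁ᗮ).comp (T.comp H₁ᗮ.subtypeL)) Ω n :=
  stmt_0_general Ω m n hm T H₁ hinv hT hT1
end
end

section
/- Let b : ℕ → ℝ satisfy b_n > 0 for all n, suppose the series Σ_{n=0}^∞ b_n x^n converges for every x ∈ [0,1), and suppose the sequence √(b_n/b_{n+1}) is bounded. Let T be the backward weighted shift on ℓ²(ℕ, ℂ) with T e_0 = 0 and T e_{n+1} = √(b_n/b_{n+1}) e_n. Let k ≥ 1 and a_1, …, a_k be real numbers such that the operator I + Σ_{n=1}^k a_n (T*)^n T^n is positive. Then for every x ∈ [0,1), (1 + Σ_{n=1}^k a_n x^n) · (Σ_{n=0}^∞ b_n x^n) ≥ b_0. -/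
/-!
Fix `x ∈ [0, 1)`. The vector `w = (√(b n * x ^ n))ₙ` lies in `ℓ²` with `‖w‖² = ∑ b n * x ^ n`, and
since the weights of `T` telescope, `T w = √x • w`. The vector `u = w - w₀ e₀` has
`‖u‖² = ‖w‖² - b 0` and still `T u = √x • w`, so `‖Tⁿ u‖² = xⁿ ‖w‖²` for `n ≥ 1`. Positivity of
`1 + ∑ aₙ T*ⁿ Tⁿ` tested on `u` reads `‖u‖² + ∑ aₙ ‖Tⁿ u‖² ≥ 0`, which is the inequality.
-/

open ContinuousLinearMap

noncomputable section

open scoped InnerProductSpace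

section PositiveCombination

variable {E : Type*} [NormedAddCommGroup E] [InnerProductSpace ℂ E] [CompleteSpace E]

theorem ContinuousLinearMap.re_inner_adjoint_pow_mul_pow_apply_self (T : E →L[ℂ] E) (n : ℕ)
    (u : E) : RCLike.re ⟪(adjoint T ^ n * T ^ n) u, u⟫_ℂ = ‖(T ^ n) u‖ ^ 2 := by
  rw [apply_norm_sq_eq_inner_adjoint_left, ← star_eq_adjoint, ← star_eq_adjoint, star_pow]
  rfl

theorem ContinuousLinearMap.IsPositive.sq_norm_add_sum_mul_sq_norm_pow_apply_nonneg
    {T : E →L[ℂ] E} {s : Finset ℕ} {a : ℕ → ℝ}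
    (h : (1 + ∑ n ∈ s, (a n : ℂ) • (adjoint T ^ n * T ^ n)).IsPositive) (u : E) :
    0 ≤ ‖u‖ ^ 2 + ∑ n ∈ s, a n * ‖(T ^ n) u‖ ^ 2 := by
  have hterm : ∀ n, RCLike.re ⟪((a n : ℂ) • (adjoint T ^ n * T ^ n)) u, u⟫_ℂ =
      a n * ‖(T ^ n) u‖ ^ 2 := fun n => by
    rw [smul_apply, inner_smul_left, Complex.conj_ofReal, RCLike.re_to_complex,
      Complex.re_ofReal_mul, ← RCLike.re_to_complex, re_inner_adjoint_pow_mul_pow_apply_self]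
  have := h.re_inner_nonneg_left u
  rwa [add_apply, one_apply_eq_self, sum_apply, inner_add_left, sum_inner, map_add, map_sum,
    Finset.sum_congr rfl fun n _ => hterm n, inner_self_eq_norm_sq] at this

end PositiveCombination

theorem ContinuousLinearMap.pow_succ_apply_eq_smul {R M : Type*} [Semiring R] [AddCommMonoid M]
    [Module R M] [TopologicalSpace M] (T : M →L[R] M) {u w : M} {c : R} (hu : T u = c • w)
    (hw : T w = c • w) (n : ℕ) : (T ^ (n + 1)) u = c ^ (n + 1) • w := by
  induction n with
  | zero => simpa using hu
  | succ m ih => rw [pow_succ' T, mul_apply_eq_comp, ih, map_smul, hw, smul_smul, ← pow_succ]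

theorem Real.sqrt_div_mul_sqrt_mul_pow_succ (p : ℝ) {q x : ℝ} (hq : 0 < q) (hx : 0 ≤ x)
    (j : ℕ) : √(p / q) * √(q * x ^ (j + 1)) = √x * √(p * x ^ j) := by
  rw [← Real.sqrt_mul' _ (by positivity), ← Real.sqrt_mul hx]
  congr 1
  field_simp
  ring

theorem Complex.sq_norm_ofReal_sqrt {r : ℝ} (hr : 0 ≤ r) : ‖(√r : ℂ)‖ ^ 2 = r := by
  rw [Complex.norm_real, Real.norm_of_nonneg (Real.sqrt_nonneg r), Real.sq_sqrt hr]

namespace lp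

theorem norm_sub_single_apply_sq {𝕜 ι : Type*} [RCLike 𝕜] [DecidableEq ι] {G : ι → Type*}
    [∀ i, NormedAddCommGroup (G i)] [∀ i, InnerProductSpace 𝕜 (G i)] (v : lp G 2) (i : ι) :
    ‖v - lp.single 2 i (v i)‖ ^ 2 = ‖v‖ ^ 2 - ‖v i‖ ^ 2 := by
  rw [@norm_sub_sq 𝕜, lp.inner_single_right, inner_self_eq_norm_sq, lp.norm_single (by norm_num)]
  ring

theorem single_eq_smul_single_one {𝕜 ι : Type*} [NormedRing 𝕜] [DecidableEq ι] (p : ENNReal)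
    (i : ι) (z : 𝕜) : lp.single (E := fun _ => 𝕜) p i z = z • lp.single p i 1 := by
  rw [← lp.single_smul, smul_eq_mul, mul_one]

theorem memℓp_two_ofReal_sqrt {g : ℕ → ℝ} (hg0 : ∀ j, 0 ≤ g j) (hg : Summable g) :
    Memℓp (fun j => (√(g j) : ℂ)) 2 := by
  refine memℓp_gen ?_
  simpa [Real.sq_sqrt (hg0 _)] using hg

theorem norm_sq_mk_ofReal_sqrt {g : ℕ → ℝ} (hg0 : ∀ j, 0 ≤ g j)
    (h : Memℓp (fun j => (√(g j) : ℂ)) 2) :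
    ‖(⟨_, h⟩ : lp (fun _ : ℕ => ℂ) 2)‖ ^ 2 = ∑' j, g j := by
  simpa [Real.sq_sqrt (hg0 _)] using lp.norm_rpow_eq_tsum (p := 2) (by norm_num) ⟨_, h⟩

end lp

def IsBackwardWeightedShift (T : lp (fun _ : ℕ => ℂ) 2 →L[ℂ] lp (fun _ : ℕ => ℂ) 2)
    (c : ℕ → ℂ) : Prop :=
  T (lp.single 2 0 1) = 0 ∧ ∀ n, T (lp.single 2 (n + 1) 1) = c n • lp.single 2 n 1

namespace IsBackwardWeightedShift

variable {T : lp (fun _ : ℕ => ℂ) 2 →L[ℂ] lp (fun _ : ℕ => ℂ) 2} {c : ℕ → ℂ}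

theorem apply_single_zero (hT : IsBackwardWeightedShift T c) (z : ℂ) :
    T (lp.single 2 0 z) = 0 := by
  rw [lp.single_eq_smul_single_one, map_smul, hT.1, smul_zero]

theorem apply_single_succ (hT : IsBackwardWeightedShift T c) (n : ℕ) (z : ℂ) :
    T (lp.single 2 (n + 1) z) = lp.single 2 n (c n * z) := by
  rw [lp.single_eq_smul_single_one, map_smul, hT.2, smul_smul, mul_comm,
    ← lp.single_eq_smul_single_one]

theorem apply_eq_smul (hT : IsBackwardWeightedShift T c) {v : lp (fun _ : ℕ => ℂ) 2} {s : ℂ}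
    (hv : ∀ j, c j * v (j + 1) = s * v j) : T v = s • v := by
  have hv_sum := lp.hasSum_single (by norm_num) v
  have hTv_sum : HasSum (fun j => T (lp.single 2 j (v j))) (s • v) := by
    refine (hasSum_nat_add_iff' 1).mp ?_
    simpa [hT.apply_single_succ, hv, hT.apply_single_zero, ← smul_eq_mul, lp.single_smul] using
      hv_sum.const_smul s
  exact (hv_sum.mapL T).unique hTv_sum

end IsBackwardWeightedShift

theorem stmt_2_general (b : ℕ → ℝ) (hb : ∀ n, 0 < b n)
    (hconv : ∀ x ∈ Set.Ico (0 : ℝ) 1, Summable fun n => b n * x ^ n)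
    (T : lp (fun _ : ℕ => ℂ) 2 →L[ℂ] lp (fun _ : ℕ => ℂ) 2)
    (hT0 : T (lp.single 2 0 1) = 0)
    (hT : ∀ n : ℕ, T (lp.single 2 (n + 1) 1) =
      (Real.sqrt (b n / b (n + 1)) : ℂ) • lp.single 2 n 1)
    (k : ℕ) (a : ℕ → ℝ)
    (hpos : (1 + ∑ n ∈ Finset.Icc 1 k,
        ((a n : ℂ)) • ((ContinuousLinearMap.adjoint T) ^ n * T ^ n)).IsPositive) :
    ∀ x ∈ Set.Ico (0 : ℝ) 1,
      b 0 ≤ (1 + ∑ n ∈ Finset.Icc 1 k, a n * x ^ n) * ∑' n, b n * x ^ n := by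
  intro x hx
  have hg0 : ∀ n, 0 ≤ b n * x ^ n := fun n => mul_nonneg (hb n).le (pow_nonneg hx.1 n)
  have hshift : IsBackwardWeightedShift T fun n => (√(b n / b (n + 1)) : ℂ) := ⟨hT0, hT⟩
  set w : lp (fun _ : ℕ => ℂ) 2 := ⟨_, lp.memℓp_two_ofReal_sqrt hg0 (hconv x hx)⟩
  have hw : ‖w‖ ^ 2 = ∑' n, b n * x ^ n := lp.norm_sq_mk_ofReal_sqrt hg0 _
  have hTw : T w = (√x : ℂ) • w := hshift.apply_eq_smul fun j => by
    simp only [w, ← Complex.ofReal_mul]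
    rw [Real.sqrt_div_mul_sqrt_mul_pow_succ _ (hb (j + 1)) hx.1]
  set u := w - lp.single 2 0 (w 0)
  have hu : ‖u‖ ^ 2 = ∑' n, b n * x ^ n - b 0 := by
    rw [lp.norm_sub_single_apply_sq (𝕜 := ℂ), hw]
    simp [w, Real.sq_sqrt (hb 0).le]
  have hTu : T u = (√x : ℂ) • w := by rw [map_sub, hshift.apply_single_zero, sub_zero, hTw]
  have hTnu : ∀ n ∈ Finset.Icc 1 k, ‖(T ^ n) u‖ ^ 2 = x ^ n * ∑' n, b n * x ^ n := by
    intro n hn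
    obtain ⟨m, rfl⟩ := Nat.exists_eq_add_of_le' (Finset.mem_Icc.1 hn).1
    rw [pow_succ_apply_eq_smul T hTu hTw, norm_smul, mul_pow, norm_pow, ← pow_mul,
      pow_mul', Complex.sq_norm_ofReal_sqrt hx.1, hw]
  have key := hpos.sq_norm_add_sum_mul_sq_norm_pow_apply_nonneg u
  rw [hu, Finset.sum_congr rfl fun n hn => by rw [hTnu n hn]] at key
  rw [add_mul, one_mul, Finset.sum_mul]
  simp only [mul_assoc] at key ⊢
  linarith

theorem stmt_2 (b : ℕ → ℝ) (hb : ∀ n, 0 < b n)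
    (hconv : ∀ x ∈ Set.Ico (0 : ℝ) 1, Summable fun n => b n * x ^ n)
    (hbdd : ∃ C : ℝ, ∀ n, Real.sqrt (b n / b (n + 1)) ≤ C)
    (T : lp (fun _ : ℕ => ℂ) 2 →L[ℂ] lp (fun _ : ℕ => ℂ) 2)
    (hT0 : T (lp.single 2 0 1) = 0)
    (hT : ∀ n : ℕ, T (lp.single 2 (n + 1) 1) =
      (Real.sqrt (b n / b (n + 1)) : ℂ) • lp.single 2 n 1)
    (k : ℕ) (hk : 1 ≤ k) (a : ℕ → ℝ)
    (hpos : (1 + ∑ n ∈ Finset.Icc 1 k,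
        ((a n : ℂ)) • ((ContinuousLinearMap.adjoint T) ^ n * T ^ n)).IsPositive) :
    ∀ x ∈ Set.Ico (0 : ℝ) 1,
      b 0 ≤ (1 + ∑ n ∈ Finset.Icc 1 k, a n * x ^ n) * ∑' n, b n * x ^ n :=
  stmt_2_general b hb hconv T hT0 hT k a hpos
end
end

section
/- Let T be a bounded operator on a complex separable Hilbert space H belonging to B_1(𝔻), where 𝔻 is the open unit disk in ℂ. Then the adjoint T* is an isometry if and only if T is unitarily equivalent to the backward shift S on ℓ²(ℕ, ℂ) defined by S e_0 = 0 and S e_{n+1} = e_n, i.e. there exists a unitary operator U : H → ℓ²(ℕ, ℂ) with U T U* = S. -/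
/-!
If `T*` is an isometry then `T T* = 1`, so for a unit vector `u ∈ ker T` the vectors `T*ⁿ u`
form an orthonormal sequence on which `T` acts as the backward shift. For `|ω| < 1` the vector
`∑ ωⁿ T*ⁿ u` is a nonzero eigenvector of `T` at `ω`; as `ker (T - ω)` is one-dimensional it spans
this kernel, so the Cowen–Douglas spanning condition makes the sequence a Hilbert basis.
Conversely, if `T` is the backward shift on a Hilbert basis, then `T*` is the forward shift on it,
so `T T* = 1` and `T*` is an isometry.
-/

open ContinuousLinearMap Submodule

noncomputable section

open scoped InnerProductSpace

section Eigenvector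

variable {𝕜 E : Type*} [NontriviallyNormedField 𝕜] [NormedAddCommGroup E] [NormedSpace 𝕜 E]

theorem apply_eq_smul_of_hasSum_pow_smul {T : E →L[𝕜] E} {e : ℕ → E} (h0 : T (e 0) = 0)
    (hsucc : ∀ n, T (e (n + 1)) = e n) {ω : 𝕜} {x : E}
    (hx : HasSum (fun n => ω ^ n • e n) x) : T x = ω • x := by
  refine (T.hasSum hx).unique ?_
  rw [← hasSum_nat_add_iff' 1]
  simpa [pow_succ', mul_smul, hsucc, h0] using hx.const_smul ω

end Eigenvector

section InnerProductSpace

variable {𝕜 E : Type*} [RCLike 𝕜] [NormedAddCommGroup E] [InnerProductSpace 𝕜 E]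

theorem orthonormal_iterate_of_inner_map_map {A : E → E}
    (hA : ∀ x y, ⟪A x, A y⟫_𝕜 = ⟪x, y⟫_𝕜) {e : E} (he : ‖e‖ = 1)
    (he_perp : ∀ x, ⟪e, A x⟫_𝕜 = 0) : Orthonormal 𝕜 fun n => A^[n] e := by
  rw [orthonormal_iff_ite]
  intro m
  induction m with
  | zero =>
    rintro (_ | n)
    · simp [inner_self_eq_norm_sq_to_K, he]
    · simp [Function.iterate_succ_apply', he_perp]
  | succ m ih =>
    rintro (_ | n)
    · simp [Function.iterate_succ_apply', inner_eq_zero_symm.mp (he_perp _)]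
    · simp [Function.iterate_succ_apply', hA, ih]

theorem ker_sub_smul_le_closure_span [CompleteSpace E] {T : E →L[𝕜] E} {e : ℕ → E}
    (he : Orthonormal 𝕜 e) (h0 : T (e 0) = 0) (hsucc : ∀ n, T (e (n + 1)) = e n) {ω : 𝕜}
    (hω : ‖ω‖ < 1)
    (hker : Module.finrank 𝕜 (LinearMap.ker ((T - ω • 1 : E →L[𝕜] E) : E →ₗ[𝕜] E)) = 1) :
    LinearMap.ker ((T - ω • 1 : E →L[𝕜] E) : E →ₗ[𝕜] E) ≤
      (span 𝕜 (Set.range e)).topologicalClosure := by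
  have hsum : Summable fun n => ω ^ n • e n := by
    refine .of_norm ?_
    simpa [norm_smul, he.1] using summable_geometric_of_lt_one (norm_nonneg ω) hω
  set x := ∑' n, ω ^ n • e n
  have hx_mem : x ∈ LinearMap.ker ((T - ω • 1 : E →L[𝕜] E) : E →ₗ[𝕜] E) := by
    simpa [sub_eq_zero] using apply_eq_smul_of_hasSum_pow_smul h0 hsucc hsum.hasSum
  have hx_ne : x ≠ 0 := by
    have hinner : ⟪e 0, x⟫_𝕜 = 1 := by
      refine ((innerSL 𝕜 (e 0)).hasSum hsum.hasSum).unique ?_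
      convert hasSum_ite_eq 0 (1 : 𝕜) using 2 with n
      rcases n with _ | n <;> simp [orthonormal_iff_ite.mp he, he.1]
    rintro h
    simp [h] at hinner
  have hx_closure : x ∈ (span 𝕜 (Set.range e)).topologicalClosure :=
    mem_closure_of_tendsto hsum.hasSum <| .of_forall fun s =>
      sum_mem fun n _ => smul_mem _ _ (subset_span ⟨n, rfl⟩)
  rw [eq_span_singleton_of_mem_of_finrank_eq_one hker hx_mem hx_ne, span_singleton_le_iff_mem]
  exact hx_closure

theorem adjoint_apply_eq_of_hilbertBasis [CompleteSpace E] (b : HilbertBasis ℕ 𝕜 E)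
    {T : E →L[𝕜] E} (h0 : T (b 0) = 0) (hsucc : ∀ n, T (b (n + 1)) = b n) (n : ℕ) :
    adjoint T (b n) = b (n + 1) := by
  refine b.repr.injective <| lp.ext <| funext fun m => ?_
  simp only [b.repr_apply_apply, adjoint_inner_right]
  rcases m with _ | m <;> simp [h0, hsucc, orthonormal_iff_ite.mp b.orthonormal]

theorem comp_adjoint_eq_one_of_hilbertBasis [CompleteSpace E] (b : HilbertBasis ℕ 𝕜 E)
    {T : E →L[𝕜] E} (h0 : T (b 0) = 0) (hsucc : ∀ n, T (b (n + 1)) = b n) :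
    T ∘L adjoint T = 1 := by
  refine ext_on (dense_iff_topologicalClosure_eq_top.mpr b.dense_span) ?_
  rintro _ ⟨n, rfl⟩
  simp [adjoint_apply_eq_of_hilbertBasis b h0 hsucc, hsucc]

theorem exists_backwardShift_conj_iff_exists_hilbertBasis {T : E →L[𝕜] E} :
    (∃ S : lp (fun _ : ℕ => 𝕜) 2 →L[𝕜] lp (fun _ : ℕ => 𝕜) 2,
        S (lp.single 2 0 1) = 0 ∧
        (∀ n : ℕ, S (lp.single 2 (n + 1) 1) = lp.single 2 n 1) ∧
        ∃ U : E ≃ₗᵢ[𝕜] lp (fun _ : ℕ => 𝕜) 2, ∀ x : E, U (T x) = S (U x)) ↔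
      ∃ b : HilbertBasis ℕ 𝕜 E, T (b 0) = 0 ∧ ∀ n, T (b (n + 1)) = b n := by
  constructor
  · rintro ⟨S, hS0, hSsucc, U, hU⟩
    have hb : ∀ n, HilbertBasis.ofRepr U n = U.symm (lp.single 2 n 1) := fun n =>
      (HilbertBasis.ofRepr U).repr_symm_single n |>.symm
    refine ⟨.ofRepr U, ?_, fun n => ?_⟩ <;>
      refine U.injective ?_ <;> simp [hb, hU, hS0, hSsucc]
  · rintro ⟨b, h0, hsucc⟩
    refine ⟨(b.repr : E →L[𝕜] _) ∘L T ∘L (b.repr.symm : _ →L[𝕜] E), ?_, fun n => ?_, b.repr,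
      fun x => by simp⟩ <;> simp [h0, hsucc, b.repr_self]

end InnerProductSpace

theorem exists_hilbertBasis_of_cowenDouglas {H : Type*} [NormedAddCommGroup H]
    [InnerProductSpace ℂ H] [CompleteSpace H] {T : H →L[ℂ] H}
    (hT : CowenDouglas T (Metric.ball (0 : ℂ) 1) 1) (hTT : T ∘L adjoint T = 1) :
    ∃ b : HilbertBasis ℕ ℂ H, T (b 0) = 0 ∧ ∀ n, T (b (n + 1)) = b n := by
  obtain ⟨v, hv, hv0⟩ : ∃ v ∈ LinearMap.ker (T : H →ₗ[ℂ] H), v ≠ 0 := by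
    have hker := (hT.1 0 (Metric.mem_ball_self one_pos)).2
    rw [zero_smul, sub_zero] at hker
    exact Submodule.exists_mem_ne_zero_of_ne_bot fun h => by
      rw [h, finrank_bot] at hker
      exact zero_ne_one hker
  set A := adjoint T
  have hA : ∀ x y, ⟪A x, A y⟫_ℂ = ⟪x, y⟫_ℂ := by
    rwa [A.inner_map_map_iff_adjoint_comp_self, adjoint_adjoint]
  have hTA : ∀ x, T (A x) = x := fun x => by simpa using congr($hTT x)
  set u : H := (‖v‖⁻¹ : ℂ) • v
  have hTu : T u = 0 := by simp [u, show T v = 0 from hv]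
  set e : ℕ → H := fun n => A^[n] u
  have he0 : T (e 0) = 0 := hTu
  have hsucc : ∀ n, T (e (n + 1)) = e n := fun n => by
    simp only [e, Function.iterate_succ_apply', hTA]
  have he : Orthonormal ℂ e := orthonormal_iterate_of_inner_map_map hA (norm_smul_inv_norm hv0)
    fun x => by rw [adjoint_inner_right, hTu, inner_zero_left]
  have hsp : ⊤ ≤ (span ℂ (Set.range e)).topologicalClosure := by
    rw [← hT.2]
    refine topologicalClosure_minimal _ (iSup₂_le fun ω hω => ?_) (isClosed_topologicalClosure _)
    exact ker_sub_smul_le_closure_span he he0 hsucc (mem_ball_zero_iff.mp hω) (hT.1 ω hω).2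
  exact ⟨.mk he hsp, by simpa using he0, by simpa using hsucc⟩

theorem stmt_7_general {H : Type*} [NormedAddCommGroup H] [InnerProductSpace ℂ H]
    [CompleteSpace H]
    (T : H →L[ℂ] H) (hT : CowenDouglas T (Metric.ball (0 : ℂ) 1) 1) :
    Isometry (ContinuousLinearMap.adjoint T) ↔
      ∃ S : lp (fun _ : ℕ => ℂ) 2 →L[ℂ] lp (fun _ : ℕ => ℂ) 2,
        S (lp.single 2 0 1) = 0 ∧
        (∀ n : ℕ, S (lp.single 2 (n + 1) 1) = lp.single 2 n 1) ∧
        ∃ U : H ≃ₗᵢ[ℂ] lp (fun _ : ℕ => ℂ) 2, ∀ x : H, U (T x) = S (U x) := by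
  rw [exists_backwardShift_conj_iff_exists_hilbertBasis, isometry_iff_adjoint_comp_self,
    adjoint_adjoint]
  exact ⟨exists_hilbertBasis_of_cowenDouglas hT,
    fun ⟨b, h0, hsucc⟩ => comp_adjoint_eq_one_of_hilbertBasis b h0 hsucc⟩

theorem stmt_7 {H : Type*} [NormedAddCommGroup H] [InnerProductSpace ℂ H]
    [CompleteSpace H] [TopologicalSpace.SeparableSpace H]
    (T : H →L[ℂ] H) (hT : CowenDouglas T (Metric.ball (0 : ℂ) 1) 1) :
    Isometry (ContinuousLinearMap.adjoint T) ↔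
      ∃ S : lp (fun _ : ℕ => ℂ) 2 →L[ℂ] lp (fun _ : ℕ => ℂ) 2,
        S (lp.single 2 0 1) = 0 ∧
        (∀ n : ℕ, S (lp.single 2 (n + 1) 1) = lp.single 2 n 1) ∧
        ∃ U : H ≃ₗᵢ[ℂ] lp (fun _ : ℕ => ℂ) 2, ∀ x : H, U (T x) = S (U x) :=
  stmt_7_general T hT
end
end

section
/- Let T be a bounded operator on a complex separable Hilbert space H with ‖T‖ ≤ 1, and let M be a closed subspace of H invariant under T such that T|_M belongs to B_1(𝔻) and (T|_M)* is an isometry. Then P_M T|_{M⊥} = 0; that is, M⊥ is also invariant under T, so M reduces T. -/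
open ContinuousLinearMap Submodule

noncomputable section

/-!
For `m ∈ M`, `‖m‖ = ‖P_M T* m‖ ≤ ‖T* m‖ ≤ ‖m‖` because `T*` is a contraction, so by Pythagoras
`T* m` has no component in `Mᗮ`. Hence `M` is `T*`-invariant, i.e. `Mᗮ` is `T`-invariant.
-/

namespace Submodule

variable {𝕜 E : Type*} [RCLike 𝕜] [NormedAddCommGroup E] [InnerProductSpace 𝕜 E]

theorem mem_of_norm_le_norm_orthogonalProjectionOnto (K : Submodule 𝕜 E)
    [K.HasOrthogonalProjection] {v : E} (h : ‖v‖ ≤ ‖K.orthogonalProjectionOnto v‖) : v ∈ K :=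
  (K.mem_iff_norm_starProjection v).mpr (le_antisymm (K.norm_starProjection_apply_le v) h)

theorem orthogonalProjectionOnto_comp_comp_subtypeL_eq_zero {T : E →L[𝕜] E}
    {K L : Submodule 𝕜 E} [K.HasOrthogonalProjection] (h : Set.MapsTo T L Kᗮ) :
    K.orthogonalProjectionOnto ∘L T ∘L L.subtypeL = 0 := by
  ext x
  simp only [comp_apply, subtypeL_apply, orthogonalProjectionOnto_eq_zero_iff.mpr (h x.2),
    zero_apply]

variable [CompleteSpace E]

theorem adjoint_orthogonalProjectionOnto_comp_comp_subtypeL (K : Submodule 𝕜 E)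
    [CompleteSpace K] (T : E →L[𝕜] E) :
    adjoint (K.orthogonalProjectionOnto ∘L T ∘L K.subtypeL) =
      K.orthogonalProjectionOnto ∘L adjoint T ∘L K.subtypeL := by
  rw [adjoint_comp, adjoint_comp, K.adjoint_subtypeL, K.adjoint_orthogonalProjectionOnto]
  rfl

theorem mapsTo_adjoint_of_isometry_adjoint_compression {T : E →L[𝕜] E} (hT : ‖T‖ ≤ 1)
    (K : Submodule 𝕜 E) [CompleteSpace K]
    (hiso : Isometry (adjoint (K.orthogonalProjectionOnto ∘L T ∘L K.subtypeL))) :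
    Set.MapsTo (adjoint T) K K := by
  intro v hv
  refine K.mem_of_norm_le_norm_orthogonalProjectionOnto ?_
  have hnorm := (AddMonoidHomClass.isometry_iff_norm _).mp hiso ⟨v, hv⟩
  rw [adjoint_orthogonalProjectionOnto_comp_comp_subtypeL] at hnorm
  calc ‖adjoint T v‖ ≤ ‖adjoint T‖ * ‖v‖ := le_opNorm _ _
    _ ≤ 1 * ‖v‖ := by rw [LinearIsometryEquiv.norm_map]; gcongr
    _ = ‖K.orthogonalProjectionOnto (adjoint T v)‖ := by rw [one_mul]; exact hnorm.symm

theorem mapsTo_orthogonal_of_mapsTo_adjoint {T : E →L[𝕜] E} {K : Submodule 𝕜 E}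
    (h : Set.MapsTo (adjoint T) K K) : Set.MapsTo T Kᗮ Kᗮ := by
  intro x hx
  rw [SetLike.mem_coe, mem_orthogonal]
  intro u hu
  rw [← adjoint_inner_left]
  exact hx _ (h hu)

end Submodule

theorem stmt_8_general {H : Type*} [NormedAddCommGroup H] [InnerProductSpace ℂ H]
    [CompleteSpace H]
    (T : H →L[ℂ] H) (hT : ‖T‖ ≤ 1)
    (M : Submodule ℂ H) [CompleteSpace M]
    (hiso : Isometry
      (ContinuousLinearMap.adjoint ((orthogonalProjection M).comp (T.comp M.subtypeL)))) :
    (orthogonalProjection M).comp (T.comp Mᗮ.subtypeL) = 0 ∧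
    ∀ x ∈ Mᗮ, T x ∈ Mᗮ := by
  have hreduce : Set.MapsTo T Mᗮ Mᗮ :=
    mapsTo_orthogonal_of_mapsTo_adjoint (mapsTo_adjoint_of_isometry_adjoint_compression hT M hiso)
  exact ⟨orthogonalProjectionOnto_comp_comp_subtypeL_eq_zero hreduce, hreduce⟩

theorem stmt_8 {H : Type*} [NormedAddCommGroup H] [InnerProductSpace ℂ H]
    [CompleteSpace H] [TopologicalSpace.SeparableSpace H]
    (T : H →L[ℂ] H) (hT : ‖T‖ ≤ 1)
    (M : Submodule ℂ H) [CompleteSpace M]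
    (hinv : ∀ x ∈ M, T x ∈ M)
    (hB1 : CowenDouglas ((orthogonalProjection M).comp (T.comp M.subtypeL))
      (Metric.ball (0 : ℂ) 1) 1)
    (hiso : Isometry
      (ContinuousLinearMap.adjoint ((orthogonalProjection M).comp (T.comp M.subtypeL)))) :
    (orthogonalProjection M).comp (T.comp Mᗮ.subtypeL) = 0 ∧
    ∀ x ∈ Mᗮ, T x ∈ Mᗮ :=
  stmt_8_general T hT M hiso
end
end

section
/- Let H1, H2 be complex Hilbert spaces and let T = [[T1, T12],[0, T2]] be the block operator on H1 ⊕ H2, where T1, T2, T12 are bounded, ‖T1‖ ≤ 1, and I − T1*T1 is invertible. Then ‖T‖ ≤ 1 if and only if I − T2*T2 − T12*(I + T1 (I − T1*T1)^{-1} T1*) T12 is a positive operator, i.e. I − T2*T2 ≥ T12*[I + T1 (I − T1*T1)^{-1} T1*] T12. -/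
/-!
Let `D = 1 - T₁* T₁`, which is positive since `‖T₁‖ ≤ 1`. For fixed `y`, the inequality
`‖T (x, y)‖² ≤ ‖x‖² + ‖y‖²` for all `x` says `c ≤ re ⟪D x, x⟫ - 2 re ⟪x, b⟫` for all `x`, where
`b = T₁* T₁₂ y` and `c = ‖T₁₂ y‖² + ‖T₂ y‖² - ‖y‖²`. Completing the square at `x = D⁻¹ b`, the
minimum of the right-hand side is `-re ⟪D⁻¹ b, b⟫`, and `c ≤ -re ⟪D⁻¹ b, b⟫` is `0 ≤ re ⟪S y, y⟫`
for the Schur complement `S` of `D` in `1 - T* T`.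
-/

open ContinuousLinearMap
open scoped InnerProductSpace
open RCLike (re)

noncomputable section

namespace ContinuousLinearMap

variable {𝕜 E F : Type*} [RCLike 𝕜]

lemma opNorm_le_one_iff_withLp_prod {G : Type*}
    [SeminormedAddCommGroup E] [NormedSpace 𝕜 E] [SeminormedAddCommGroup F] [NormedSpace 𝕜 F]
    [SeminormedAddCommGroup G] [NormedSpace 𝕜 G] (T : WithLp 2 (E × F) →L[𝕜] G) :
    ‖T‖ ≤ 1 ↔ ∀ x y, ‖T (WithLp.toLp 2 (x, y))‖ ^ 2 ≤ ‖x‖ ^ 2 + ‖y‖ ^ 2 := by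
  simp only [opNorm_le_iff zero_le_one, one_mul]
  constructor
  · intro h x y
    have := pow_le_pow_left₀ (norm_nonneg _) (h (WithLp.toLp 2 (x, y))) 2
    rwa [WithLp.prod_norm_sq_eq_of_L2] at this
  · intro h z
    refine le_of_pow_le_pow_left₀ two_ne_zero (norm_nonneg z) ?_
    rw [WithLp.prod_norm_sq_eq_of_L2]
    exact h z.fst z.snd

variable [NormedAddCommGroup E] [InnerProductSpace 𝕜 E]

lemma IsPositive.forall_le_re_inner_sub_iff {D : E →L[𝕜] E} (hD : D.IsPositive) (hD_unit : IsUnit D)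
    (b : E) (c : ℝ) :
    (∀ x, c ≤ re ⟪D x, x⟫_𝕜 - 2 * re ⟪x, b⟫_𝕜) ↔ c ≤ -re ⟪Ring.inverse D b, b⟫_𝕜 := by
  set z := Ring.inverse D b
  have hDz : D z = b := by
    rw [← mul_apply_eq_comp, Ring.mul_inverse_cancel D hD_unit, one_apply_eq_self]
  have hsq (x : E) : re ⟪D x, x⟫_𝕜 - 2 * re ⟪x, b⟫_𝕜 = re ⟪D (x - z), x - z⟫_𝕜 - re ⟪z, b⟫_𝕜 := by
    have h1 : ⟪D x, z⟫_𝕜 = ⟪x, b⟫_𝕜 := by rw [hD.inner_left_eq_inner_right, hDz]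
    simp only [map_sub, inner_sub_left, inner_sub_right, h1, hDz]
    rw [inner_re_symm b x, inner_re_symm b z]
    ring
  constructor
  · intro h
    simpa [hsq] using h z
  · intro h x
    rw [hsq]
    linarith [hD.re_inner_nonneg_left (x - z)]

variable [CompleteSpace E] [NormedAddCommGroup F] [InnerProductSpace 𝕜 F] [CompleteSpace F]

lemma re_inner_one_sub_adjoint_comp_self_apply (T : E →L[𝕜] F) (x : E) :
    re ⟪(1 - adjoint T ∘L T) x, x⟫_𝕜 = ‖x‖ ^ 2 - ‖T x‖ ^ 2 := by
  rw [sub_apply, inner_sub_left, map_sub, comp_apply, adjoint_inner_left, one_apply_eq_self,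
    inner_self_eq_norm_sq, inner_self_eq_norm_sq]

lemma isPositive_one_sub_adjoint_comp_self {T : E →L[𝕜] F} (hT : ‖T‖ ≤ 1) :
    (1 - adjoint T ∘L T).IsPositive := by
  refine isPositive_def'.mpr ⟨?_, fun x => ?_⟩
  · exact (IsSelfAdjoint.one _).sub
      (isSelfAdjoint_iff'.mpr (by rw [adjoint_comp, adjoint_adjoint]))
  · rw [reApplyInnerSelf_apply, re_inner_one_sub_adjoint_comp_self_apply, sub_nonneg]
    gcongr
    simpa using T.le_of_opNorm_le hT x

section Block

variable (T₁ : E →L[𝕜] E) (T₂ : F →L[𝕜] F) (T₁₂ : F →L[𝕜] E)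

/-- The Schur complement of the corner `1 - T₁* T₁` in the block operator `1 - T* T`, where
`T = [[T₁, T₁₂], [0, T₂]]`. -/
def defectSchurComplement : F →L[𝕜] F :=
  1 - adjoint T₂ * T₂ -
    adjoint T₁₂ ∘L ((1 + T₁ * Ring.inverse (1 - adjoint T₁ * T₁) * adjoint T₁) ∘L T₁₂)

lemma isSelfAdjoint_defectSchurComplement : IsSelfAdjoint (defectSchurComplement T₁ T₂ T₁₂) := by
  have hD : IsSelfAdjoint (1 - adjoint T₁ * T₁) := (IsSelfAdjoint.one _).sub (.star_mul_self T₁)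
  exact ((IsSelfAdjoint.one _).sub (.star_mul_self T₂)).sub
    (((IsSelfAdjoint.one _).add (hD.ringInverse.conjugate T₁)).adjoint_conj T₁₂)

lemma re_inner_defectSchurComplement_apply (y : F) :
    re ⟪defectSchurComplement T₁ T₂ T₁₂ y, y⟫_𝕜 =
      ‖y‖ ^ 2 - ‖T₂ y‖ ^ 2 - ‖T₁₂ y‖ ^ 2 -
        re ⟪Ring.inverse (1 - adjoint T₁ * T₁) (adjoint T₁ (T₁₂ y)), adjoint T₁ (T₁₂ y)⟫_𝕜 := by
  rw [defectSchurComplement, sub_apply, inner_sub_left, map_sub, mul_def,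
    re_inner_one_sub_adjoint_comp_self_apply]
  simp only [mul_def, comp_apply, adjoint_inner_left, add_apply, one_apply_eq_self, inner_add_left,
    map_add, inner_self_eq_norm_sq (𝕜 := 𝕜), adjoint_inner_right]
  ring

variable {T₁} in
lemma forall_norm_sq_le_iff_re_inner_defectSchurComplement_nonneg (hT₁ : ‖T₁‖ ≤ 1)
    (hD : IsUnit (1 - adjoint T₁ * T₁)) (y : F) :
    (∀ x, ‖T₁ x + T₁₂ y‖ ^ 2 + ‖T₂ y‖ ^ 2 ≤ ‖x‖ ^ 2 + ‖y‖ ^ 2) ↔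
      0 ≤ re ⟪defectSchurComplement T₁ T₂ T₁₂ y, y⟫_𝕜 := by
  set b := adjoint T₁ (T₁₂ y)
  have hx (x : E) : ‖T₁ x + T₁₂ y‖ ^ 2 + ‖T₂ y‖ ^ 2 ≤ ‖x‖ ^ 2 + ‖y‖ ^ 2 ↔
      ‖T₁₂ y‖ ^ 2 + ‖T₂ y‖ ^ 2 - ‖y‖ ^ 2 ≤
        re ⟪(1 - adjoint T₁ * T₁) x, x⟫_𝕜 - 2 * re ⟪x, b⟫_𝕜 := by
    rw [mul_def, re_inner_one_sub_adjoint_comp_self_apply, adjoint_inner_right,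
      norm_add_sq (𝕜 := 𝕜)]
    constructor <;> intro h <;> linarith
  have hD_pos : (1 - adjoint T₁ * T₁).IsPositive := isPositive_one_sub_adjoint_comp_self hT₁
  rw [forall_congr' hx, hD_pos.forall_le_re_inner_sub_iff hD,
    re_inner_defectSchurComplement_apply]
  constructor <;> intro h <;> linarith

end Block

end ContinuousLinearMap

theorem stmt_9 {H₁ H₂ : Type*}
    [NormedAddCommGroup H₁] [InnerProductSpace ℂ H₁] [CompleteSpace H₁]
    [NormedAddCommGroup H₂] [InnerProductSpace ℂ H₂] [CompleteSpace H₂]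
    (T₁ : H₁ →L[ℂ] H₁) (T₂ : H₂ →L[ℂ] H₂) (T₁₂ : H₂ →L[ℂ] H₁)
    (hT₁ : ‖T₁‖ ≤ 1)
    (hinv : IsUnit (1 - ContinuousLinearMap.adjoint T₁ * T₁))
    (T : WithLp 2 (H₁ × H₂) →L[ℂ] WithLp 2 (H₁ × H₂))
    (hT : ∀ (x : H₁) (y : H₂),
      T ((WithLp.equiv 2 (H₁ × H₂)).symm (x, y)) =
        (WithLp.equiv 2 (H₁ × H₂)).symm (T₁ x + T₁₂ y, T₂ y)) :
    ‖T‖ ≤ 1 ↔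
      (1 - ContinuousLinearMap.adjoint T₂ * T₂ -
        (ContinuousLinearMap.adjoint T₁₂).comp
          (((1 : H₁ →L[ℂ] H₁) + T₁ * Ring.inverse (1 - ContinuousLinearMap.adjoint T₁ * T₁) *
            ContinuousLinearMap.adjoint T₁).comp T₁₂)).IsPositive := by
  have hT' (x : H₁) (y : H₂) : T (WithLp.toLp 2 (x, y)) = WithLp.toLp 2 (T₁ x + T₁₂ y, T₂ y) :=
    hT x y
  change _ ↔ (defectSchurComplement T₁ T₂ T₁₂).IsPositive
  rw [opNorm_le_one_iff_withLp_prod, forall_comm, isPositive_def',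
    and_iff_right (isSelfAdjoint_defectSchurComplement T₁ T₂ T₁₂)]
  simp only [hT', WithLp.prod_norm_sq_eq_of_L2]
  exact forall_congr' fun y =>
    forall_norm_sq_le_iff_re_inner_defectSchurComplement_nonneg T₂ T₁₂ hT₁ hinv y
end
end

section
/- Let n be a positive integer and let A be a bounded operator on a complex Hilbert space K such that Σ_{i=0}^n (−1)^i (n choose i) (A*)^i A^i = e₀ ⊗ e₀ for a unit vector e₀ ∈ K, where e₀ ⊗ e₀ is the rank-one projection x ↦ ⟨x, e₀⟩ e₀. Then for every ω in the open unit disk 𝔻 and every x ∈ K with A x = ω x and ⟨x, e₀⟩ = 1, one has ‖x‖² = (1 − |ω|²)^{−n}. -/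
/-! Pair the defect identity with the eigenvector `x`. Since `‖Aⁱ x‖ = |ω|ⁱ ‖x‖`, the left side
becomes `∑ (-1)ⁱ (n choose i) |ω|²ⁱ ‖x‖² = (1 - |ω|²)ⁿ ‖x‖²` by the binomial theorem, while the
right side is `|⟪e₀, x⟫|² = 1`. -/

open ContinuousLinearMap

theorem ContinuousLinearMap.pow_apply_of_apply_eq_smul {R M : Type*} [CommSemiring R]
    [TopologicalSpace M] [AddCommMonoid M] [Module R M] {A : M →L[R] M} {ω : R} {x : M}
    (hx : A x = ω • x) (i : ℕ) : (A ^ i) x = ω ^ i • x := by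
  induction i with
  | zero => simp
  | succ k ih => rw [pow_succ', mul_apply_eq_comp, ih, map_smul, hx, smul_smul, pow_succ]

section

variable {𝕜 E : Type*} [RCLike 𝕜] [NormedAddCommGroup E] [InnerProductSpace 𝕜 E]

theorem inner_smulRight_innerSL_apply (e x : E) :
    inner 𝕜 x ((innerSL 𝕜 e).smulRight e x) = (‖inner 𝕜 e x‖ ^ 2 : ℝ) := by
  rw [smulRight_apply, innerSL_apply_apply, inner_smul_right, ← inner_conj_symm x e,
    RCLike.mul_conj, RCLike.ofReal_pow]

variable [CompleteSpace E]

theorem inner_adjoint_pow_mul_pow_apply (A : E →L[𝕜] E) (i : ℕ) (x : E) :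
    inner 𝕜 x ((adjoint A ^ i * A ^ i) x) = (‖(A ^ i) x‖ ^ 2 : ℝ) := by
  rw [← star_eq_adjoint, ← star_pow, star_eq_adjoint, mul_apply_eq_comp, adjoint_inner_right,
    inner_self_eq_norm_sq_to_K, RCLike.ofReal_pow]

theorem inner_binomial_defect_apply_of_apply_eq_smul {A : E →L[𝕜] E} {ω : 𝕜} {x : E}
    (hx : A x = ω • x) (n : ℕ) :
    inner 𝕜 x ((∑ i ∈ Finset.range (n + 1), ((-1 : 𝕜) ^ i * (n.choose i : 𝕜)) •
        (adjoint A ^ i * A ^ i)) x) = ((1 - ‖ω‖ ^ 2) ^ n * ‖x‖ ^ 2 : ℝ) := by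
  have hterm : ∀ i ∈ Finset.range (n + 1),
      inner 𝕜 x ((((-1 : 𝕜) ^ i * (n.choose i : 𝕜)) • (adjoint A ^ i * A ^ i)) x) =
        (((-‖ω‖ ^ 2) ^ i * 1 ^ (n - i) * n.choose i * ‖x‖ ^ 2 : ℝ) : 𝕜) := by
    intro i _
    rw [smul_apply, inner_smul_right, inner_adjoint_pow_mul_pow_apply,
      pow_apply_of_apply_eq_smul hx, norm_smul, norm_pow]
    push_cast
    ring
  rw [sum_apply, inner_sum, Finset.sum_congr rfl hterm, ← RCLike.ofReal_sum, ← Finset.sum_mul,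
    ← add_pow, neg_add_eq_sub]

end

theorem stmt_15_general {K : Type*} [NormedAddCommGroup K] [InnerProductSpace ℂ K]
    [CompleteSpace K]
    (n : ℕ) (A : K →L[ℂ] K) (e₀ : K)
    (hsum : (∑ i ∈ Finset.range (n + 1), ((-1 : ℂ) ^ i * (n.choose i : ℂ)) •
        ((ContinuousLinearMap.adjoint A) ^ i * A ^ i)) = (innerSL ℂ e₀).smulRight e₀) :
    ∀ ω ∈ Metric.ball (0 : ℂ) 1, ∀ x : K,
      A x = ω • x → inner ℂ e₀ x = (1 : ℂ) →
      ‖x‖ ^ 2 = ((1 - ‖ω‖ ^ 2) ^ n)⁻¹ := by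
  intro ω _ x hAx hx₀
  have hquad := inner_binomial_defect_apply_of_apply_eq_smul hAx n
  rw [hsum, inner_smulRight_innerSL_apply, hx₀, norm_one, one_pow] at hquad
  exact eq_inv_of_mul_eq_one_right (Complex.ofReal_injective hquad).symm

theorem stmt_15 {K : Type*} [NormedAddCommGroup K] [InnerProductSpace ℂ K]
    [CompleteSpace K]
    (n : ℕ) (hn : 0 < n) (A : K →L[ℂ] K) (e₀ : K) (he₀ : ‖e₀‖ = 1)
    (hsum : (∑ i ∈ Finset.range (n + 1), ((-1 : ℂ) ^ i * (n.choose i : ℂ)) •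
        ((ContinuousLinearMap.adjoint A) ^ i * A ^ i)) = (innerSL ℂ e₀).smulRight e₀) :
    ∀ ω ∈ Metric.ball (0 : ℂ) 1, ∀ x : K,
      A x = ω • x → inner ℂ e₀ x = (1 : ℂ) →
      ‖x‖ ^ 2 = ((1 - ‖ω‖ ^ 2) ^ n)⁻¹ :=
  stmt_15_general n A e₀ hsum
end
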